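/- arXiv:2310.07922 — 2 statements merged into one kernel-verified Lean document; each statement's English description precedes it below -/
import Mathlib

section
/- Let h : ℝⁿ → ℝ be G-Lipschitz and μ-sharp with minimizer set X⋆ and minimum value 0, i.e., h(x) ≥ μ · dist(x, X⋆) for all x. Suppose the iterate x⁺ satisfies (i) ‖x⁺ − x⋆‖² ≤ ‖x − x⋆‖² − ‖x − x⁺‖² for every x⋆ ∈ X⋆, and (ii) G‖x⁺ − x‖ ≥ h(x). Then dist(x⁺, X⋆)² ≤ (1 − μ²/G²) · dist(x, X⋆)². -/
/-!
Fix any `xs ∈ X⋆`. Sharpness and the step-length condition give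
`μ · dist(x, X⋆) ≤ h x ≤ G ‖x⁺ - x‖`, so the Fejér inequality yields
`dist(x⁺, X⋆)² ≤ ‖x⁺ - xs‖² ≤ ‖x - xs‖² - (μ/G)² dist(x, X⋆)²`.
Taking the infimum over `xs` gives the contraction.
-/

open Metric

lemma sq_div_sq_mul_sq_le_sq {a d G r : ℝ} (had : 0 ≤ a * d) (h : a * d ≤ G * r) :
    a ^ 2 / G ^ 2 * d ^ 2 ≤ r ^ 2 := by
  have hsq : (a * d) ^ 2 ≤ (G * r) ^ 2 := pow_le_pow_left₀ had h 2
  rw [div_mul_eq_mul_div]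
  exact div_le_of_le_mul₀ (sq_nonneg G) (sq_nonneg r) (by linarith)

lemma Metric.infDist_sq_le_sub_of_forall_dist_sq_le {α : Type*} [PseudoMetricSpace α]
    {s : Set α} {x x' : α} {c : ℝ} (hs : s.Nonempty)
    (h : ∀ y ∈ s, dist x' y ^ 2 ≤ dist x y ^ 2 - c) :
    infDist x' s ^ 2 ≤ infDist x s ^ 2 - c := by
  have hbound (y : α) (hy : y ∈ s) : infDist x' s ^ 2 + c ≤ dist x y ^ 2 := by
    have := pow_le_pow_left₀ infDist_nonneg (infDist_le_dist_of_mem (x := x') hy) 2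
    linarith [h y hy]
  have hsqrt : √(infDist x' s ^ 2 + c) ≤ infDist x s := by
    have := hs.to_subtype
    rw [infDist_eq_iInf (x := x)]
    exact le_ciInf fun y : s => (Real.sqrt_le_left dist_nonneg).2 (hbound y y.2)
  linarith [(Real.sqrt_le_left infDist_nonneg).1 hsqrt]

theorem stmt_8_general {n : ℕ} (h : EuclideanSpace ℝ (Fin n) → ℝ)
    (Xstar : Set (EuclideanSpace ℝ (Fin n)))
    (G μ : ℝ)
    (hμ : 0 < μ)
    (hsharp : ∀ x, μ * Metric.infDist x Xstar ≤ h x)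
    (x xplus : EuclideanSpace ℝ (Fin n))
    (hfejer : ∀ xs ∈ Xstar, ‖xplus - xs‖ ^ 2 ≤ ‖x - xs‖ ^ 2 - ‖x - xplus‖ ^ 2)
    (hdec : h x ≤ G * ‖xplus - x‖) :
    Metric.infDist xplus Xstar ^ 2 ≤ (1 - μ ^ 2 / G ^ 2) * Metric.infDist x Xstar ^ 2 := by
  rcases Xstar.eq_empty_or_nonempty with rfl | hne
  · simp
  have hstep : μ ^ 2 / G ^ 2 * infDist x Xstar ^ 2 ≤ ‖x - xplus‖ ^ 2 := by
    refine sq_div_sq_mul_sq_le_sq (mul_nonneg hμ.le infDist_nonneg) ?_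
    calc μ * infDist x Xstar ≤ h x := hsharp x
      _ ≤ G * ‖xplus - x‖ := hdec
      _ = G * ‖x - xplus‖ := by rw [norm_sub_rev]
  have hcontract :
      infDist xplus Xstar ^ 2 ≤ infDist x Xstar ^ 2 - μ ^ 2 / G ^ 2 * infDist x Xstar ^ 2 :=
    infDist_sq_le_sub_of_forall_dist_sq_le hne fun xs hxs => by
      simp only [dist_eq_norm]
      linarith [hfejer xs hxs]
  linarith

theorem stmt_8 {n : ℕ} (h : EuclideanSpace ℝ (Fin n) → ℝ)
    (Xstar : Set (EuclideanSpace ℝ (Fin n)))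
    (G μ : ℝ) (hne : Xstar.Nonempty) (hcl : IsClosed Xstar)
    (hμ : 0 < μ) (hμG : μ ≤ G)
    (hmin : ∀ xs ∈ Xstar, h xs = 0)
    (hlip : ∀ a b, |h a - h b| ≤ G * ‖a - b‖)
    (hsharp : ∀ x, μ * Metric.infDist x Xstar ≤ h x)
    (x xplus : EuclideanSpace ℝ (Fin n))
    (hfejer : ∀ xs ∈ Xstar, ‖xplus - xs‖ ^ 2 ≤ ‖x - xs‖ ^ 2 - ‖x - xplus‖ ^ 2)
    (hdec : h x ≤ G * ‖xplus - x‖) :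
    Metric.infDist xplus Xstar ^ 2 ≤ (1 - μ ^ 2 / G ^ 2) * Metric.infDist x Xstar ^ 2 :=
  stmt_8_general h Xstar G μ hμ hsharp x xplus hfejer hdec
end

section
/- Let φ : ℝᵏ → ℝ be convex and nondecreasing in each argument, and let ψ₁, ..., ψₖ : ℝⁿ → ℝ be convex. Suppose φ̂ is a minorant of φ at the point w = (ψ₁(z), ..., ψₖ(z)) that is also nondecreasing in each argument, and ψ̂ᵢ is a minorant of ψᵢ at z for each i. Then x ↦ φ̂(ψ̂₁(x), ..., ψ̂ₖ(x)) is a minorant of x ↦ φ(ψ₁(x), ..., ψₖ(x)) at z. -/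
theorem ConvexOn.comp_pi {𝕜 E ι α β : Type*} [Semiring 𝕜] [PartialOrder 𝕜]
    [AddCommMonoid E] [SMul 𝕜 E] [AddCommMonoid α] [PartialOrder α] [SMul 𝕜 α]
    [AddCommMonoid β] [PartialOrder β] [SMul 𝕜 β]
    {s : Set E} {φ : (ι → β) → α} {ψ : ι → E → β}
    (hs : Convex 𝕜 s) (hφ : ConvexOn 𝕜 Set.univ φ) (hφ_mono : Monotone φ)
    (hψ : ∀ i, ConvexOn 𝕜 s (ψ i)) :
    ConvexOn 𝕜 s (fun x => φ (fun i => ψ i x)) := by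
  refine ⟨hs, fun x hx y hy a b ha hb hab => ?_⟩
  calc φ (fun i => ψ i (a • x + b • y))
      ≤ φ (a • (fun i => ψ i x) + b • (fun i => ψ i y)) :=
        hφ_mono fun i => (hψ i).2 hx hy ha hb hab
    _ ≤ a • φ (fun i => ψ i x) + b • φ (fun i => ψ i y) :=
        hφ.2 (Set.mem_univ _) (Set.mem_univ _) ha hb hab

theorem stmt_19_general {n k : ℕ} (φ φhat : (Fin k → ℝ) → ℝ)
    (ψ ψhat : Fin k → EuclideanSpace ℝ (Fin n) → ℝ)
    (z : EuclideanSpace ℝ (Fin n))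
    (hφhatconv : ConvexOn ℝ Set.univ φhat) (hφhatmono : Monotone φhat)
    (hφhatle : ∀ w, φhat w ≤ φ w)
    (hφhateq : φhat (fun i => ψ i z) = φ (fun i => ψ i z))
    (hψhatconv : ∀ i, ConvexOn ℝ Set.univ (ψhat i))
    (hψhatle : ∀ i x, ψhat i x ≤ ψ i x)
    (hψhateq : ∀ i, ψhat i z = ψ i z) :
    ConvexOn ℝ Set.univ (fun x => φhat (fun i => ψhat i x)) ∧
      (∀ x, φhat (fun i => ψhat i x) ≤ φ (fun i => ψ i x)) ∧
      φhat (fun i => ψhat i z) = φ (fun i => ψ i z) := by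
  refine ⟨hφhatconv.comp_pi convex_univ hφhatmono hψhatconv, fun x => ?_, ?_⟩
  · calc φhat (fun i => ψhat i x) ≤ φhat (fun i => ψ i x) := hφhatmono fun i => hψhatle i x
      _ ≤ φ (fun i => ψ i x) := hφhatle _
  · rw [funext hψhateq, hφhateq]

theorem stmt_19 {n k : ℕ} (φ φhat : (Fin k → ℝ) → ℝ)
    (ψ ψhat : Fin k → EuclideanSpace ℝ (Fin n) → ℝ)
    (z : EuclideanSpace ℝ (Fin n))
    (hφconv : ConvexOn ℝ Set.univ φ) (hφmono : Monotone φ)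
    (hψconv : ∀ i, ConvexOn ℝ Set.univ (ψ i))
    (hφhatconv : ConvexOn ℝ Set.univ φhat) (hφhatmono : Monotone φhat)
    (hφhatle : ∀ w, φhat w ≤ φ w)
    (hφhateq : φhat (fun i => ψ i z) = φ (fun i => ψ i z))
    (hψhatconv : ∀ i, ConvexOn ℝ Set.univ (ψhat i))
    (hψhatle : ∀ i x, ψhat i x ≤ ψ i x)
    (hψhateq : ∀ i, ψhat i z = ψ i z) :
    ConvexOn ℝ Set.univ (fun x => φhat (fun i => ψhat i x)) ∧
      (∀ x, φhat (fun i => ψhat i x) ≤ φ (fun i => ψ i x)) ∧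
      φhat (fun i => ψhat i z) = φ (fun i => ψ i z) :=
  stmt_19_general φ φhat ψ ψhat z hφhatconv hφhatmono hφhatle hφhateq hψhatconv hψhatle hψhateq
end
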